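/- Let X, Y be real normed linear spaces, x ∈ X nonzero, T : X → Y a bounded linear operator with Tx ≠ 0, and f ∈ J(x). Then T preserves Birkhoff-James orthogonality at x with respect to ker f (i.e., Tx ⊥_B Tz for all z ∈ ker f) if and only if there exists g ∈ J(Tx) such that T(ker f) ⊆ ker g. -/

import Mathlib

/-- Birkhoff-James orthogonality. -/
def BJOrth {X : Type*} [NormedAddCommGroup X] [NormedSpace ℝ X] (x y : X) : Prop :=
  ∀ t : ℝ, ‖x‖ ≤ ‖x + t • y‖

/-- The set of support functionals at `x`. -/
def suppFun {X : Type*} [NormedAddCommGroup X] [NormedSpace ℝ X] (x : X) :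
    Set (X →L[ℝ] ℝ) := {f | ‖f‖ = 1 ∧ f x = ‖x‖}

/-!
For a subspace `M`, `u ⊥_B M` says exactly that `‖u‖ = dist(u, M)`, i.e. that the image of `u`
in the (seminormed) quotient `E ⧸ M` has norm `‖u‖`. A Hahn–Banach support functional of that
image, pulled back along the quotient map, is a support functional at `u` vanishing on `M`
(James' characterisation); the converse is the estimate `‖u‖ = g (u + t • v) ≤ ‖u + t • v‖`.
Applied to `u = T x` and `M = T (ker f)` this gives the theorem.
-/

theorem Submodule.Quotient.norm_mk_eq_of_forall_le {R E : Type*} [Ring R]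
    [SeminormedAddCommGroup E] [Module R E] {M : Submodule R E} {u : E}
    (h : ∀ m ∈ M, ‖u‖ ≤ ‖u + m‖) : ‖(Submodule.Quotient.mk u : E ⧸ M)‖ = ‖u‖ := by
  refine le_antisymm (Submodule.Quotient.norm_mk_le M u) ?_
  refine QuotientAddGroup.le_norm_iff.2 fun w hw ↦ ?_
  have hwu : w - u ∈ M := (Submodule.Quotient.eq M).1 hw
  simpa using h _ hwu

section BirkhoffJames

variable {E : Type*} [NormedAddCommGroup E] [NormedSpace ℝ E]

theorem BJOrth.of_mem_suppFun {u v : E} {g : E →L[ℝ] ℝ} (hg : g ∈ suppFun u) (hv : g v = 0) :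
    BJOrth u v := fun t ↦
  calc ‖u‖ = g (u + t • v) := by simp [hv, hg.2]
    _ ≤ ‖g‖ * ‖u + t • v‖ := (le_abs_self _).trans (g.le_opNorm _)
    _ = ‖u + t • v‖ := by rw [hg.1, one_mul]

theorem forall_bjOrth_iff_forall_norm_le {u : E} {M : Submodule ℝ E} :
    (∀ m ∈ M, BJOrth u m) ↔ ∀ m ∈ M, ‖u‖ ≤ ‖u + m‖ :=
  ⟨fun h m hm ↦ by simpa using h m hm 1, fun h m hm t ↦ h _ (M.smul_mem t hm)⟩

theorem mem_suppFun_of_norm_le_one {u : E} (hu : u ≠ 0) {g : E →L[ℝ] ℝ} (hg : ‖g‖ ≤ 1)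
    (hgu : g u = ‖u‖) : g ∈ suppFun u := by
  refine ⟨le_antisymm hg ?_, hgu⟩
  have : ‖u‖ ≤ ‖g‖ * ‖u‖ :=
    calc ‖u‖ = g u := hgu.symm
      _ ≤ ‖g‖ * ‖u‖ := (le_abs_self _).trans (g.le_opNorm u)
  exact le_of_mul_le_mul_right (by simpa using this) (norm_pos_iff.2 hu)

theorem exists_mem_suppFun_of_forall_bjOrth {u : E} (hu : u ≠ 0) {M : Submodule ℝ E}
    (h : ∀ m ∈ M, BJOrth u m) : ∃ g ∈ suppFun u, ∀ m ∈ M, g m = 0 := by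
  have hnorm : ‖(Submodule.Quotient.mk u : E ⧸ M)‖ = ‖u‖ :=
    Submodule.Quotient.norm_mk_eq_of_forall_le (forall_bjOrth_iff_forall_norm_le.1 h)
  obtain ⟨φ, hφ, hφu⟩ := exists_dual_vector ℝ (Submodule.Quotient.mk u : E ⧸ M)
    (by simpa [hnorm] using hu)
  refine ⟨φ.comp M.mkQL, mem_suppFun_of_norm_le_one hu ?_ (by simpa [hnorm] using hφu), ?_⟩
  · calc ‖φ.comp M.mkQL‖ ≤ ‖φ‖ * ‖M.mkQL‖ := φ.opNorm_comp_le _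
      _ ≤ 1 * 1 := by
        rw [hφ]
        gcongr
        exact M.mkQL.opNorm_le_bound zero_le_one fun w ↦ by
          simpa using Submodule.Quotient.norm_mk_le M w
      _ = 1 := one_mul 1
  · intro m hm
    simp [(Submodule.Quotient.mk_eq_zero M).2 hm]

theorem forall_bjOrth_iff_exists_mem_suppFun {u : E} (hu : u ≠ 0) (M : Submodule ℝ E) :
    (∀ m ∈ M, BJOrth u m) ↔ ∃ g ∈ suppFun u, ∀ m ∈ M, g m = 0 :=
  ⟨exists_mem_suppFun_of_forall_bjOrth hu, fun ⟨_, hg, hgM⟩ m hm ↦ .of_mem_suppFun hg (hgM m hm)⟩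

end BirkhoffJames

theorem stmt_10_general {X Y : Type*} [NormedAddCommGroup X] [NormedSpace ℝ X]
    [NormedAddCommGroup Y] [NormedSpace ℝ Y]
    (x : X) (T : X →L[ℝ] Y) (hTx : T x ≠ 0)
    (f : X →L[ℝ] ℝ) :
    (∀ z : X, f z = 0 → BJOrth (T x) (T z)) ↔
      ∃ g ∈ suppFun (T x), ∀ z : X, f z = 0 → g (T z) = 0 := by
  simpa [Submodule.mem_map] using
    forall_bjOrth_iff_exists_mem_suppFun hTx ((LinearMap.ker (f : X →ₗ[ℝ] ℝ)).map (T : X →ₗ[ℝ] Y))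

theorem stmt_10 {X Y : Type*} [NormedAddCommGroup X] [NormedSpace ℝ X]
    [NormedAddCommGroup Y] [NormedSpace ℝ Y]
    (x : X) (hx : x ≠ 0) (T : X →L[ℝ] Y) (hTx : T x ≠ 0)
    (f : X →L[ℝ] ℝ) (hf : f ∈ suppFun x) :
    (∀ z : X, f z = 0 → BJOrth (T x) (T z)) ↔
      ∃ g ∈ suppFun (T x), ∀ z : X, f z = 0 → g (T z) = 0 :=
  stmt_10_general x T hTx f
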